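/- Let 0 ≤ q_l ≤ q_r be real numbers and let z ∈ ℂ with z ∉ [−q_r, −q_l] ∪ [q_l, q_r] (i.e. it is not the case that Im z = 0 and q_l ≤ |Re z| ≤ q_r). Then β_{q_l}(z)² + β_{q_r}(z)² ≠ 0 and a(z) ≠ 0; that is, in the case q_r ≥ q_l ≥ 0 the transmission-coefficient denominator a has no zeros on its domain of definition (so no solitons appear). -/

import Mathlib

open Complex

/-- `β_q(z) = ((z − q)/(z + q))^{1/4}` with the principal branch of the complex power. -/
noncomputable def betaFn (q : ℝ) (z : ℂ) : ℂ := ((z - (q : ℂ)) / (z + (q : ℂ))) ^ ((1 : ℂ) / 4)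

/-- The transmission-coefficient denominator
`a(z) = (β_{q_l}β_{q_r}⁻¹ + β_{q_l}⁻¹β_{q_r})/2`. -/
noncomputable def aFn (ql qr : ℝ) (z : ℂ) : ℂ :=
  (betaFn ql z * (betaFn qr z)⁻¹ + (betaFn ql z)⁻¹ * betaFn qr z) / 2

lemma betaFn_sq_pos (q : ℝ) (z : ℂ) (hq : 0 ≤ q)
    (hz : ¬(z.im = 0 ∧ |z.re| = q)) :
    0 < ((betaFn q z) ^ 2).re ∨ (((betaFn q z) ^ 2).re = 0 ∧ 0 < ((betaFn q z) ^ 2).im) := by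
  have hz1 : z - (q : ℂ) ≠ 0 := by
    intro h
    have hzq : z = (q : ℂ) := sub_eq_zero.mp h
    exact hz ⟨by simp [hzq], by simp [hzq, _root_.abs_of_nonneg hq]⟩
  have hz2 : z + (q : ℂ) ≠ 0 := by
    intro h
    have hzq : z = -(q : ℂ) := by linear_combination h
    exact hz ⟨by simp [hzq], by simp [hzq, _root_.abs_of_nonneg hq]⟩
  set w : ℂ := (z - (q : ℂ)) / (z + (q : ℂ)) with hw
  have hw0 : w ≠ 0 := div_ne_zero hz1 hz2
  have hbeta : (betaFn q z) ^ 2 = Complex.exp ((1 / 2 : ℂ) * Complex.log w) := by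
    rw [betaFn, ← hw, Complex.cpow_def_of_ne_zero hw0, ← Complex.exp_nat_mul]
    norm_num
    ring_nf
  rw [hbeta]
  have hLre : ((1 / 2 : ℂ) * Complex.log w).re = Real.log ‖w‖ / 2 := by
    simp [Complex.mul_re, Complex.log_re]; ring
  have hLim : ((1 / 2 : ℂ) * Complex.log w).im = Complex.arg w / 2 := by
    simp [Complex.mul_im, Complex.log_im]; ring
  rw [Complex.exp_re, Complex.exp_im, hLre, hLim]
  have hpi1 : -Real.pi < Complex.arg w := Complex.neg_pi_lt_arg w
  have hpi2 : Complex.arg w ≤ Real.pi := Complex.arg_le_pi w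
  rcases lt_or_eq_of_le hpi2 with hlt | heq
  · left
    have hcos : 0 < Real.cos (Complex.arg w / 2) := by
      apply Real.cos_pos_of_mem_Ioo
      constructor <;> [linarith; linarith]
    positivity
  · right
    rw [heq]
    constructor
    · rw [show Real.pi / 2 = Real.pi / 2 from rfl, Real.cos_pi_div_two]
      ring
    · rw [Real.sin_pi_div_two]
      positivity

/-- For `0 ≤ q_l ≤ q_r` and `z ∉ [−q_r,−q_l] ∪ [q_l,q_r]`, one has
`β_{q_l}(z)² + β_{q_r}(z)² ≠ 0` and `a(z) ≠ 0`: the function `a` has no zeros on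
its domain of definition, so no solitons appear. -/
theorem a_has_no_zeros (ql qr : ℝ) (hql : 0 ≤ ql) (hlr : ql ≤ qr)
    (z : ℂ) (hz : ¬(z.im = 0 ∧ ql ≤ |z.re| ∧ |z.re| ≤ qr)) :
    (betaFn ql z) ^ 2 + (betaFn qr z) ^ 2 ≠ 0 ∧ aFn ql qr z ≠ 0 := by
  have h1 := betaFn_sq_pos ql z hql (by
    intro ⟨h1, h2⟩; exact hz ⟨h1, le_of_eq h2.symm, h2 ▸ hlr⟩)
  have h2 := betaFn_sq_pos qr z (hql.trans hlr) (by
    intro ⟨h1', h2'⟩; exact hz ⟨h1', h2' ▸ hlr, le_of_eq h2'⟩)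
  have hsum : (betaFn ql z) ^ 2 + (betaFn qr z) ^ 2 ≠ 0 := by
    intro h
    have hre : ((betaFn ql z) ^ 2).re + ((betaFn qr z) ^ 2).re = 0 := by
      rw [← Complex.add_re, h]; rfl
    have him : ((betaFn ql z) ^ 2).im + ((betaFn qr z) ^ 2).im = 0 := by
      rw [← Complex.add_im, h]; rfl
    rcases h1 with h1 | ⟨h1a, h1b⟩ <;> rcases h2 with h2 | ⟨h2a, h2b⟩ <;> linarith
  have hb1 : betaFn ql z ≠ 0 := by
    intro h
    rcases h1 with h1 | ⟨_, h1⟩ <;> rw [h] at h1 <;> norm_num at h1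
  have hb2 : betaFn qr z ≠ 0 := by
    intro h
    rcases h2 with h2 | ⟨_, h2⟩ <;> rw [h] at h2 <;> norm_num at h2
  refine ⟨hsum, ?_⟩
  have ha : aFn ql qr z = ((betaFn ql z) ^ 2 + (betaFn qr z) ^ 2) /
      (2 * betaFn ql z * betaFn qr z) := by
    rw [aFn]; field_simp
  rw [ha]
  exact div_ne_zero hsum (by simp [hb1, hb2])
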